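/- arXiv:2206.15249 — 10 statements merged into one kernel-verified Lean document; each statement's English description precedes it below -/
import Mathlib

section
/- Let c₁ > 0 and c₂ ∈ ℝ, and define k : ℝ → ℝ by k(s) = c₁/(c₁²·(c₂ + s)² + 1). Then k is positive, non-constant, and satisfies (3/4)·k'(s)² − (1/2)·k''(s)·k(s) − k(s)⁴ = 0 for every s ∈ ℝ. -/
/-!
The equation `(3/4)k'² − (1/2)k''k − k⁴ + K k² = 0` is homogeneous of degree four under
`k(s) ↦ a k(a(b + s))`, which multiplies `K` by `a²`. Hence every function
`c₁ / (c₁²(c₂ + s)² + 1)` is a rescaled translate of the flat solution `1 / (x² + 1)`,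
which is checked by differentiating twice.
-/

def HalfBiharmonicODE (K : ℝ) (k : ℝ → ℝ) : Prop :=
  ∀ s, 3 / 4 * deriv k s ^ 2 - 1 / 2 * deriv (deriv k) s * k s - k s ^ 4 + K * k s ^ 2 = 0

lemma deriv_const_mul_comp_mul_const_add (f : ℝ → ℝ) (c a b : ℝ) :
    deriv (fun s => c * f (a * (b + s))) = fun s => c * a * deriv f (a * (b + s)) := by
  rw [deriv_const_mul_field']
  funext s
  rw [mul_assoc, deriv_comp_const_add (fun x => f (a * x)), deriv_comp_mul_left, smul_eq_mul]

lemma HalfBiharmonicODE.rescale {K : ℝ} {k : ℝ → ℝ} (hk : HalfBiharmonicODE K k) (a b : ℝ) :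
    HalfBiharmonicODE (a ^ 2 * K) (fun s => a * k (a * (b + s))) := by
  intro s
  rw [deriv_const_mul_comp_mul_const_add, deriv_const_mul_comp_mul_const_add]
  linear_combination a ^ 4 * hk (a * (b + s))

lemma hasDerivAt_one_div_sq_add_one (x : ℝ) :
    HasDerivAt (fun x : ℝ => 1 / (x ^ 2 + 1)) (-2 * x / (x ^ 2 + 1) ^ 2) x := by
  have h := (hasDerivAt_const x (1 : ℝ)).div ((hasDerivAt_pow 2 x).add_const 1) (by positivity)
  exact h.congr_deriv (by ring)

lemma hasDerivAt_deriv_one_div_sq_add_one (x : ℝ) :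
    HasDerivAt (fun x : ℝ => -2 * x / (x ^ 2 + 1) ^ 2) ((6 * x ^ 2 - 2) / (x ^ 2 + 1) ^ 3) x := by
  have hden : HasDerivAt (fun x : ℝ => (x ^ 2 + 1) ^ 2) (2 * (x ^ 2 + 1) * (2 * x)) x := by
    simpa using ((hasDerivAt_pow 2 x).add_const 1).fun_pow 2
  have h := ((hasDerivAt_id' x).const_mul (-2)).div hden (by positivity)
  exact h.congr_deriv (by field_simp; ring)

lemma halfBiharmonicODE_one_div_sq_add_one : HalfBiharmonicODE 0 (fun x => 1 / (x ^ 2 + 1)) := by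
  have hd : deriv (fun x : ℝ => 1 / (x ^ 2 + 1)) = fun x => -2 * x / (x ^ 2 + 1) ^ 2 :=
    funext fun x => (hasDerivAt_one_div_sq_add_one x).deriv
  intro x
  rw [hd, (hasDerivAt_deriv_one_div_sq_add_one x).deriv]
  field_simp
  ring

/-- On the flat plane (K = 0), `k(s) = c₁/(c₁²(c₂+s)² + 1)` is positive, non-constant
and satisfies `(3/4)k'² − (1/2)k'' k − k⁴ = 0`. -/
theorem stmt_5 (c₁ c₂ : ℝ) (hc₁ : 0 < c₁)
    (k : ℝ → ℝ) (hk : k = fun s => c₁ / (c₁ ^ 2 * (c₂ + s) ^ 2 + 1)) :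
    (∀ s, 0 < k s) ∧ (∃ s t : ℝ, k s ≠ k t) ∧
      ∀ s, 3 / 4 * (deriv k s) ^ 2 - 1 / 2 * deriv (deriv k) s * k s - (k s) ^ 4 = 0 := by
  have hk' : k = fun s => c₁ * (1 / ((c₁ * (c₂ + s)) ^ 2 + 1)) := by
    rw [hk]
    funext s
    rw [mul_pow, mul_one_div]
  refine ⟨fun s => by rw [hk]; positivity, ⟨-c₂, -c₂ + 1 / c₁, ?_⟩, fun s => ?_⟩
  · rw [hk']
    field_simp
    norm_num
    intro h
    linarith
  · have h := halfBiharmonicODE_one_div_sq_add_one.rescale c₁ c₂ s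
    rw [← hk'] at h
    linarith
end

section
/- Let c₁ > 2 and c₃ ∈ ℝ, and define k : ℝ → ℝ by k(s) = 2/(c₁ + √(c₁² − 4)·sin(2(c₃ + s))). Then the denominator c₁ + √(c₁² − 4)·sin(2(c₃ + s)) is strictly positive for all s, the function k is positive and non-constant, and k satisfies (3/4)·k'(s)² − (1/2)·k''(s)·k(s) − k(s)⁴ + k(s)² = 0 for every s ∈ ℝ. -/
/-!
Writing `k = 2 / d`, the left-hand side of the equation is `(4d² + 2dd'' − d'² − 16) / d⁴`.
For `d = c + a sin 2(b + s)` the numerator is the constant `4(c² − a² − 4)`, which vanishes for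
`a = √(c² − 4)`; then `0 < a < c`, so `d > 0`, and `d` takes the two values `c ± a`.
-/

open Real

lemma hasDerivAt_two_div {d : ℝ → ℝ} {d' s : ℝ} (hd : HasDerivAt d d' s) (hd0 : d s ≠ 0) :
    HasDerivAt (fun s => 2 / d s) (-2 * d' / d s ^ 2) s :=
  ((hasDerivAt_const s (2 : ℝ)).div hd hd0).congr_deriv (by ring)

lemma halfBiharmonic_lhs_two_div {d d' d'' : ℝ → ℝ} (hd : ∀ s, HasDerivAt d (d' s) s)
    (hd' : ∀ s, HasDerivAt d' (d'' s) s) (hd0 : ∀ s, d s ≠ 0) (s : ℝ) :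
    3 / 4 * deriv (fun s => 2 / d s) s ^ 2
        - 1 / 2 * deriv (deriv fun s => 2 / d s) s * (2 / d s)
        - (2 / d s) ^ 4 + (2 / d s) ^ 2
      = (4 * d s ^ 2 + 2 * d s * d'' s - d' s ^ 2 - 16) / d s ^ 4 := by
  have hk' : deriv (fun s => 2 / d s) = fun s => -2 * d' s / d s ^ 2 :=
    funext fun s => (hasDerivAt_two_div (hd s) (hd0 s)).deriv
  have hk'' := ((hd' s).const_mul (-2)).fun_div ((hd s).pow 2) (pow_ne_zero 2 (hd0 s))
  simp only [Pi.pow_apply] at hk''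
  rw [hk', hk''.deriv]
  field_simp [hd0 s]
  ring

lemma sinusoid_first_integral (a c x : ℝ) :
    4 * (c + a * sin x) ^ 2 + 2 * (c + a * sin x) * -(4 * a * sin x) - (2 * a * cos x) ^ 2 - 16
      = 4 * (c ^ 2 - a ^ 2 - 4) := by
  linear_combination (-4 * a ^ 2) * sin_sq_add_cos_sq x

lemma hasDerivAt_add_mul_sin_two_mul (a b c s : ℝ) :
    HasDerivAt (fun s => c + a * sin (2 * (b + s))) (2 * a * cos (2 * (b + s))) s :=
  ((((hasDerivAt_id s).const_add b).const_mul 2).sin.const_mul a |>.const_add c).congr_deriv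
    (by simp only [id]; ring)

lemma hasDerivAt_mul_cos_two_mul (a b s : ℝ) :
    HasDerivAt (fun s => 2 * a * cos (2 * (b + s))) (-(4 * a * sin (2 * (b + s)))) s :=
  ((((hasDerivAt_id s).const_add b).const_mul 2).cos.const_mul (2 * a)).congr_deriv
    (by simp only [id]; ring)

lemma sqrt_sq_sub_four_lt {c : ℝ} (hc : 0 < c) : √(c ^ 2 - 4) < c :=
  (sqrt_lt' hc).2 (by linarith)

lemma add_mul_sin_pos {a c : ℝ} (ha : 0 ≤ a) (hac : a < c) (x : ℝ) : 0 < c + a * sin x := by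
  nlinarith [neg_one_le_sin x]

/-- On the round sphere (K = 1), `k(s) = 2/(c₁ + √(c₁²−4) sin 2(c₃+s))` with `c₁ > 2`
has positive denominator, is positive, non-constant and satisfies
`(3/4)k'² − (1/2)k'' k − k⁴ + k² = 0`. -/
theorem stmt_6 (c₁ c₃ : ℝ) (hc₁ : 2 < c₁)
    (k : ℝ → ℝ)
    (hk : k = fun s => 2 / (c₁ + Real.sqrt (c₁ ^ 2 - 4) * Real.sin (2 * (c₃ + s)))) :
    (∀ s : ℝ, 0 < c₁ + Real.sqrt (c₁ ^ 2 - 4) * Real.sin (2 * (c₃ + s))) ∧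
    (∀ s, 0 < k s) ∧ (∃ s t : ℝ, k s ≠ k t) ∧
      ∀ s, 3 / 4 * (deriv k s) ^ 2 - 1 / 2 * deriv (deriv k) s * k s
        - (k s) ^ 4 + (k s) ^ 2 = 0 := by
  set a := √(c₁ ^ 2 - 4)
  have ha2 : a ^ 2 = c₁ ^ 2 - 4 := sq_sqrt (by nlinarith)
  have ha : 0 < a := sqrt_pos.2 (by nlinarith)
  have hac : a < c₁ := sqrt_sq_sub_four_lt (by linarith)
  have hd : ∀ s, 0 < c₁ + a * sin (2 * (c₃ + s)) := fun s =>
    add_mul_sin_pos ha.le hac _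
  subst hk
  refine ⟨hd, fun s => div_pos two_pos (hd s), ⟨π / 4 - c₃, -(π / 4) - c₃, ?_⟩, fun s => ?_⟩
  · have h₁ : 2 * (c₃ + (π / 4 - c₃)) = π / 2 := by ring
    have h₂ : 2 * (c₃ + (-(π / 4) - c₃)) = -(π / 2) := by ring
    simp only [h₁, h₂, sin_neg, sin_pi_div_two]
    rw [Ne, div_eq_div_iff (by linarith) (by linarith)]
    linarith
  · rw [halfBiharmonic_lhs_two_div (hasDerivAt_add_mul_sin_two_mul a c₃ c₁)
      (hasDerivAt_mul_cos_two_mul a c₃) (fun s => (hd s).ne'), sinusoid_first_integral, ha2]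
    ring
end

section
/- Let c₁, c₄ ∈ ℝ, and define k : ℝ → ℝ by k(s) = 4·e^{2(c₄+s)}/((c₁ − e^{2(c₄+s)})² + 4). Then k is positive, non-constant, and satisfies (3/4)·k'(s)² − (1/2)·k''(s)·k(s) − k(s)⁴ − k(s)² = 0 for every s ∈ ℝ. -/
/-! With `x = e^{2(c₄+s)}` we have `dx/ds = 2x`, so `k`, `k'` and `k''` are rational functions of
`x`, each obtained from the previous one by applying `2x · d/dx`. The ODE becomes an identity
between rational functions in `x` whose common denominator `(c₁ - x)² + 4` never vanishes.
At `x = 1`, i.e. `s = -c₄`, the derivative `k' = 8(c₁² + 3)/((c₁ - 1)² + 4)²` is nonzero, so `k` is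
not constant. -/

open Real

noncomputable section

namespace HalfBiharmonic

def curvatureProfile (c x : ℝ) : ℝ := 4 * x / ((c - x) ^ 2 + 4)

def curvatureProfile₁ (c x : ℝ) : ℝ := 8 * x * (c ^ 2 + 4 - x ^ 2) / ((c - x) ^ 2 + 4) ^ 2

def curvatureProfile₂ (c x : ℝ) : ℝ :=
  16 * x * ((c ^ 2 + 4 - 3 * x ^ 2) * ((c - x) ^ 2 + 4) - 4 * x * (c ^ 2 + 4 - x ^ 2) * (x - c)) /
    ((c - x) ^ 2 + 4) ^ 3

variable (c : ℝ) {u : ℝ → ℝ} {s : ℝ}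

lemma curvatureProfile_pos {x : ℝ} (hx : 0 < x) : 0 < curvatureProfile c x := by
  unfold curvatureProfile
  positivity

lemma curvatureProfile₁_one_pos : 0 < curvatureProfile₁ c 1 := by
  rw [curvatureProfile₁, show c ^ 2 + 4 - 1 ^ 2 = c ^ 2 + 3 by ring]
  positivity

lemma hasDerivAt_curvatureProfile (hu : HasDerivAt u (2 * u s) s) :
    HasDerivAt (fun t => curvatureProfile c (u t)) (curvatureProfile₁ c (u s)) s := by
  have hD : (c - u s) ^ 2 + 4 ≠ 0 := by positivity
  refine ((hu.const_mul 4).fun_div (((hu.const_sub c).fun_pow 2).add_const 4) hD).congr_deriv ?_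
  unfold curvatureProfile₁
  field_simp
  ring

lemma hasDerivAt_curvatureProfile₁ (hu : HasDerivAt u (2 * u s) s) :
    HasDerivAt (fun t => curvatureProfile₁ c (u t)) (curvatureProfile₂ c (u s)) s := by
  have hD : (c - u s) ^ 2 + 4 ≠ 0 := by positivity
  refine (((hu.const_mul 8).fun_mul ((hu.fun_pow 2).const_sub _)).fun_div
    ((((hu.const_sub c).fun_pow 2).add_const 4).fun_pow 2) (pow_ne_zero 2 hD)).congr_deriv ?_
  unfold curvatureProfile₂
  field_simp
  ring

lemma curvatureProfile_ode (x : ℝ) :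
    3 / 4 * curvatureProfile₁ c x ^ 2 - 1 / 2 * curvatureProfile₂ c x * curvatureProfile c x
      - curvatureProfile c x ^ 4 - curvatureProfile c x ^ 2 = 0 := by
  have hD : (c - x) ^ 2 + 4 ≠ 0 := by positivity
  unfold curvatureProfile curvatureProfile₁ curvatureProfile₂
  field_simp
  ring

end HalfBiharmonic

lemma hasDerivAt_exp_two_mul_add (a s : ℝ) :
    HasDerivAt (fun t => exp (2 * (a + t))) (2 * exp (2 * (a + s))) s :=
  (((hasDerivAt_id s).const_add a).const_mul 2).exp.congr_deriv (by simp [mul_comm])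

end

open HalfBiharmonic in
/-- On a hyperbolic surface (K = −1), `k(s) = 4e^{2(c₄+s)}/((c₁ − e^{2(c₄+s)})² + 4)`
is positive, non-constant and satisfies `(3/4)k'² − (1/2)k'' k − k⁴ − k² = 0`. -/
theorem stmt_7 (c₁ c₄ : ℝ)
    (k : ℝ → ℝ)
    (hk : k = fun s => 4 * Real.exp (2 * (c₄ + s)) /
      ((c₁ - Real.exp (2 * (c₄ + s))) ^ 2 + 4)) :
    (∀ s, 0 < k s) ∧ (∃ s t : ℝ, k s ≠ k t) ∧
      ∀ s, 3 / 4 * (deriv k s) ^ 2 - 1 / 2 * deriv (deriv k) s * k s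
        - (k s) ^ 4 - (k s) ^ 2 = 0 := by
  set u : ℝ → ℝ := fun s => exp (2 * (c₄ + s))
  have hu (s : ℝ) : HasDerivAt u (2 * u s) s := hasDerivAt_exp_two_mul_add c₄ s
  replace hk : k = fun s => curvatureProfile c₁ (u s) := hk
  have hk' : deriv k = fun s => curvatureProfile₁ c₁ (u s) :=
    funext fun s => (hk ▸ hasDerivAt_curvatureProfile c₁ (hu s)).deriv
  have hk'' (s : ℝ) : deriv (deriv k) s = curvatureProfile₂ c₁ (u s) :=
    (hk' ▸ hasDerivAt_curvatureProfile₁ c₁ (hu s)).deriv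
  refine ⟨fun s => hk ▸ curvatureProfile_pos c₁ (exp_pos _), ?_, fun s => ?_⟩
  · by_contra! hconst
    have hk_const : k = fun _ => k 0 := funext fun s => hconst s 0
    have hu_one : u (-c₄) = 1 := by simp [u]
    apply (curvatureProfile₁_one_pos c₁).ne'
    rw [← hu_one, ← congrFun hk' (-c₄), hk_const, deriv_const]
  · rw [hk'', hk']
    exact hk ▸ curvatureProfile_ode c₁ (u s)
end

section
/- Let c₁ ≥ 2 and c₃ ∈ ℝ, and define h : ℝ → ℝ by h(s) = c₁/4 + (√(c₁² − 4)/4)·sin(2(c₃ + s)). Then h satisfies h'(s)² + 4·h(s)² − 2c₁·h(s) + 1 = 0 for every s ∈ ℝ. -/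
/-- `h(s) = c₁/4 + (√(c₁²−4)/4) sin 2(c₃+s)` with `c₁ ≥ 2` satisfies
`h'² + 4h² − 2c₁ h + 1 = 0`. -/
theorem stmt_8 (c₁ c₃ : ℝ) (hc₁ : 2 ≤ c₁)
    (h : ℝ → ℝ)
    (hh : h = fun s => c₁ / 4 + Real.sqrt (c₁ ^ 2 - 4) / 4 * Real.sin (2 * (c₃ + s)))
    (s : ℝ) :
    (deriv h s) ^ 2 + 4 * (h s) ^ 2 - 2 * c₁ * h s + 1 = 0 := by
  set a := Real.sqrt (c₁ ^ 2 - 4) with ha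
  have hnn : (0:ℝ) ≤ c₁ ^ 2 - 4 := by nlinarith
  have ha2 : a ^ 2 = c₁ ^ 2 - 4 := Real.sq_sqrt hnn
  have hd : HasDerivAt h (a / 4 * (Real.cos (2 * (c₃ + s)) * 2)) s := by
    rw [hh]
    have h1 : HasDerivAt (fun s : ℝ => 2 * (c₃ + s)) 2 s := by
      simpa using ((hasDerivAt_id s).const_add c₃).const_mul 2
    exact ((h1.sin).const_mul (a / 4)).const_add (c₁ / 4)
  rw [hd.deriv, hh]
  have := Real.sin_sq_add_cos_sq (2 * (c₃ + s))
  nlinarith [this, ha2]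
end

section
/- Let c₁, c₄ ∈ ℝ, and define h : ℝ → ℝ by h(s) = (1/8)·e^{-2(c₄+s)}·((c₁ − e^{2(c₄+s)})² + 4). Then h satisfies h'(s)² − 4·h(s)² − 2c₁·h(s) + 1 = 0 for every s ∈ ℝ. -/
/-- `h(s) = (1/8) e^{−2(c₄+s)}((c₁ − e^{2(c₄+s)})² + 4)` satisfies
`h'² − 4h² − 2c₁ h + 1 = 0`. -/
theorem stmt_9 (c₁ c₄ : ℝ)
    (h : ℝ → ℝ)
    (hh : h = fun s => 1 / 8 * Real.exp (-2 * (c₄ + s)) *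
      ((c₁ - Real.exp (2 * (c₄ + s))) ^ 2 + 4))
    (s : ℝ) :
    (deriv h s) ^ 2 - 4 * (h s) ^ 2 - 2 * c₁ * h s + 1 = 0 := by
  subst hh
  have h1 : HasDerivAt (fun s : ℝ => Real.exp (-2 * (c₄ + s)))
      (-2 * Real.exp (-2 * (c₄ + s))) s := by
    have hl : HasDerivAt (fun s : ℝ => -2 * (c₄ + s)) (-2) s := by
      simpa using ((hasDerivAt_id s).const_add c₄).const_mul (-2 : ℝ)
    simpa [mul_comm] using hl.exp
  have h2 : HasDerivAt (fun s : ℝ => Real.exp (2 * (c₄ + s)))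
      (2 * Real.exp (2 * (c₄ + s))) s := by
    have hl : HasDerivAt (fun s : ℝ => 2 * (c₄ + s)) (2) s := by
      simpa using ((hasDerivAt_id s).const_add c₄).const_mul (2 : ℝ)
    simpa [mul_comm] using hl.exp
  have h3 : HasDerivAt (fun s : ℝ => (c₁ - Real.exp (2 * (c₄ + s))) ^ 2 + 4)
      (2 * (c₁ - Real.exp (2 * (c₄ + s))) * (-(2 * Real.exp (2 * (c₄ + s))))) s := by
    have := (((hasDerivAt_const s c₁).sub h2).pow 2).add_const 4
    simpa [mul_comm, mul_assoc, mul_left_comm] using this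
  have h4 : HasDerivAt (fun s => 1 / 8 * Real.exp (-2 * (c₄ + s)) *
      ((c₁ - Real.exp (2 * (c₄ + s))) ^ 2 + 4))
      (1 / 8 * (-2 * Real.exp (-2 * (c₄ + s))) *
        ((c₁ - Real.exp (2 * (c₄ + s))) ^ 2 + 4) +
       1 / 8 * Real.exp (-2 * (c₄ + s)) *
        (2 * (c₁ - Real.exp (2 * (c₄ + s))) * (-(2 * Real.exp (2 * (c₄ + s)))))) s :=
    (h1.const_mul (1 / 8 : ℝ)).mul h3
  rw [h4.deriv]
  have he : Real.exp (-2 * (c₄ + s)) = (Real.exp (2 * (c₄ + s)))⁻¹ := by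
    rw [show (-2 : ℝ) * (c₄ + s) = -(2 * (c₄ + s)) by ring, Real.exp_neg]
  simp only [he]
  have hne : Real.exp (2 * (c₄ + s)) ≠ 0 := Real.exp_ne_zero _
  field_simp
  ring
end

section
/- Let b₁ ∈ ℝ, b₄ > 0 and b₅ ∈ ℝ. Define k : ℝ → ℝ by k(s) = b₄/(b₄²·(s − b₅)² + 1 + b₁²). Then k is positive, non-constant, and satisfies (3/4)·k'(s)² − (1/2)·k(s)·k''(s) − (1 + b₁²)·k(s)⁴ = 0 for every s ∈ ℝ. -/
/-!
Write `k = a / q` with `q(s) = A (s - c)² + B`. Since `k' = -a q' / q²` and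
`k'' = a (2 q'² - q q'') / q³`, the combination `(3/4) k'² - (1/2) k k''` equals
`a² (2 q q'' - q'²) / (4 q⁴)`, and for a quadratic `q` the numerator `2 q q'' - q'²` is
the constant `4 A B`. Hence `(3/4) k'² - (1/2) k k'' = (A B / a²) k⁴`, and the choice
`a = b₄`, `A = b₄²`, `B = 1 + b₁²` makes the coefficient `1 + b₁²`.
-/

noncomputable def inverseQuadratic (a A B c : ℝ) (s : ℝ) : ℝ :=
  a / (A * (s - c) ^ 2 + B)

namespace inverseQuadratic

variable {a A B c : ℝ}

lemma denominator_pos (hA : 0 ≤ A) (hB : 0 < B) (s : ℝ) : 0 < A * (s - c) ^ 2 + B := by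
  positivity

lemma pos (ha : 0 < a) (hA : 0 ≤ A) (hB : 0 < B) (s : ℝ) : 0 < inverseQuadratic a A B c s :=
  div_pos ha (denominator_pos hA hB s)

lemma hasDerivAt_denominator (s : ℝ) :
    HasDerivAt (fun s => A * (s - c) ^ 2 + B) (2 * A * (s - c)) s := by
  refine (((((hasDerivAt_id s).sub_const c).pow 2).const_mul A).add_const B).congr_deriv ?_
  simp only [id, Nat.cast_ofNat]
  ring

lemma deriv_eq (hA : 0 ≤ A) (hB : 0 < B) :
    deriv (inverseQuadratic a A B c) =
      fun s => -2 * a * A * (s - c) / (A * (s - c) ^ 2 + B) ^ 2 := by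
  funext s
  refine (((hasDerivAt_const s a).div (hasDerivAt_denominator s)
    (denominator_pos hA hB s).ne').congr_deriv ?_).deriv
  ring

lemma deriv_deriv_eq (hA : 0 ≤ A) (hB : 0 < B) :
    deriv (deriv (inverseQuadratic a A B c)) =
      fun s => 2 * a * A * (3 * A * (s - c) ^ 2 - B) / (A * (s - c) ^ 2 + B) ^ 3 := by
  rw [deriv_eq hA hB]
  funext s
  have hq := (denominator_pos (c := c) hA hB s).ne'
  have hnum : HasDerivAt (fun s => -2 * a * A * (s - c)) (-2 * a * A) s := by
    simpa using ((hasDerivAt_id s).sub_const c).const_mul (-2 * a * A)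
  refine ((hnum.div ((hasDerivAt_denominator s).pow 2) (pow_ne_zero 2 hq)).congr_deriv ?_).deriv
  simp only [Pi.pow_apply]
  field_simp
  ring

theorem deriv_sq_sub_mul_deriv_deriv_eq_pow_four (hA : 0 ≤ A) (hB : 0 < B) (s : ℝ) :
    3 / 4 * deriv (inverseQuadratic a A B c) s ^ 2
      - 1 / 2 * inverseQuadratic a A B c s * deriv (deriv (inverseQuadratic a A B c)) s
      = A * B / a ^ 2 * inverseQuadratic a A B c s ^ 4 := by
  rw [deriv_deriv_eq hA hB, deriv_eq hA hB]
  have hq := (denominator_pos (c := c) hA hB s).ne'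
  rcases eq_or_ne a 0 with rfl | ha
  · simp [inverseQuadratic]
  · simp only [inverseQuadratic]
    field_simp
    ring

lemma exists_ne (ha : a ≠ 0) (hA : 0 < A) (hB : 0 < B) :
    ∃ s t : ℝ, inverseQuadratic a A B c s ≠ inverseQuadratic a A B c t := by
  refine ⟨c, c + 1, fun h => ?_⟩
  norm_num [inverseQuadratic] at h
  rw [div_eq_div_iff hB.ne' (by positivity), mul_right_inj' ha] at h
  linarith

end inverseQuadratic

open inverseQuadratic in
/-- In flat `ℝ³` (K = 0): `k(s) = b₄/(b₄²(s−b₅)² + 1 + b₁²)` with `b₄ > 0` is positive,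
non-constant and satisfies `(3/4)k'² − (1/2)k k'' − (1+b₁²)k⁴ = 0`. -/
theorem stmt_12 (b₁ b₄ b₅ : ℝ) (hb₄ : 0 < b₄)
    (k : ℝ → ℝ)
    (hk : k = fun s => b₄ / (b₄ ^ 2 * (s - b₅) ^ 2 + 1 + b₁ ^ 2)) :
    (∀ s, 0 < k s) ∧ (∃ s t : ℝ, k s ≠ k t) ∧
      ∀ s, 3 / 4 * (deriv k s) ^ 2 - 1 / 2 * k s * deriv (deriv k) s
        - (1 + b₁ ^ 2) * (k s) ^ 4 = 0 := by
  have hk' : k = inverseQuadratic b₄ (b₄ ^ 2) (1 + b₁ ^ 2) b₅ := by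
    funext s
    simp only [hk, inverseQuadratic, add_assoc]
  have hA : 0 < b₄ ^ 2 := by positivity
  have hB : 0 < 1 + b₁ ^ 2 := by positivity
  subst hk'
  refine ⟨pos hb₄ hA.le hB, exists_ne hb₄.ne' hA hB, fun s => ?_⟩
  rw [deriv_sq_sub_mul_deriv_deriv_eq_pow_four hA.le hB s, mul_div_cancel_left₀ _ hA.ne']
  ring
end

section
/- Let b₁, b₆, b₇ ∈ ℝ. Define k : ℝ → ℝ by k(s) = 4·e^{-2(b₇+s)}/((b₆ + e^{-2(b₇+s)})² + 4 + 4b₁²). Then k is positive, non-constant, and satisfies (3/4)·k'(s)² − (1/2)·k(s)·k''(s) − (1 + b₁²)·k(s)⁴ − k(s)² = 0 for every s ∈ ℝ. -/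
/-!
With `u = e^{-2(b₇+s)}`, the reciprocal `q = 1/k` is the exponential trinomial
`q(s) = A e^{2s} + B + C e^{-2s}` with `A = (b₆² + 4 + 4b₁²) e^{2b₇}/4`, `B = b₆/2`,
`C = e^{-2b₇}/4`. The substitution `k = 1/q` turns the ODE into `q q''/2 − q'²/4 − q² = 1 + b₁²`,
and for a trinomial `q'' = 4(q − B)`, so the left side is the constant `4AC − B² = 1 + b₁²`.
-/

open Real

noncomputable def expTrinomial (A B C s : ℝ) : ℝ := A * exp (2 * s) + B + C * exp (-2 * s)

section Reciprocal

variable {q q' q'' : ℝ → ℝ}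

theorem deriv_inv_of_hasDerivAt (hq : ∀ s, HasDerivAt q (q' s) s) (h0 : ∀ s, q s ≠ 0) :
    deriv (fun s => (q s)⁻¹) = fun s => -q' s / q s ^ 2 :=
  funext fun s => ((hq s).inv (h0 s)).deriv

theorem deriv_deriv_inv_of_hasDerivAt (hq : ∀ s, HasDerivAt q (q' s) s)
    (hq' : ∀ s, HasDerivAt q' (q'' s) s) (h0 : ∀ s, q s ≠ 0) (s : ℝ) :
    deriv (deriv fun s => (q s)⁻¹) s = (2 * q' s ^ 2 - q s * q'' s) / q s ^ 3 := by
  rw [deriv_inv_of_hasDerivAt hq h0]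
  refine (((hq' s).neg.div ((hq s).pow 2) (pow_ne_zero 2 (h0 s))).deriv).trans ?_
  simp only [Pi.pow_apply, Pi.neg_apply]
  field_simp [h0 s]
  ring

theorem halfBiharmonicODE_inv_eq (K a : ℝ) (hq : ∀ s, HasDerivAt q (q' s) s)
    (hq' : ∀ s, HasDerivAt q' (q'' s) s) (h0 : ∀ s, q s ≠ 0) (s : ℝ) :
    3 / 4 * deriv (fun s => (q s)⁻¹) s ^ 2
        - 1 / 2 * (q s)⁻¹ * deriv (deriv fun s => (q s)⁻¹) s
        - a * (q s)⁻¹ ^ 4 + K * (q s)⁻¹ ^ 2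
      = (q s * q'' s / 2 - q' s ^ 2 / 4 + K * q s ^ 2 - a) / q s ^ 4 := by
  rw [deriv_deriv_inv_of_hasDerivAt hq hq' h0, deriv_inv_of_hasDerivAt hq h0]
  field_simp [h0 s]
  ring

end Reciprocal

section ExpTrinomial

variable (A B C : ℝ)

theorem hasDerivAt_exp_const_mul (c s : ℝ) :
    HasDerivAt (fun s => exp (c * s)) (c * exp (c * s)) s := by
  simpa [mul_comm] using ((hasDerivAt_id s).const_mul c).exp

theorem hasDerivAt_expTrinomial (s : ℝ) :
    HasDerivAt (expTrinomial A B C) (2 * A * exp (2 * s) - 2 * C * exp (-2 * s)) s := by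
  refine ((((hasDerivAt_exp_const_mul 2 s).const_mul A).add_const B).fun_add
    ((hasDerivAt_exp_const_mul (-2) s).const_mul C)).congr_deriv ?_
  ring

theorem hasDerivAt_deriv_expTrinomial (s : ℝ) :
    HasDerivAt (fun s => 2 * A * exp (2 * s) - 2 * C * exp (-2 * s))
      (4 * (expTrinomial A B C s - B)) s := by
  refine (((hasDerivAt_exp_const_mul 2 s).const_mul (2 * A)).fun_sub
    ((hasDerivAt_exp_const_mul (-2) s).const_mul (2 * C))).congr_deriv ?_
  simp only [expTrinomial]
  ring

theorem expTrinomial_ermakov_invariant (s : ℝ) :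
    expTrinomial A B C s * (4 * (expTrinomial A B C s - B)) / 2
        - (2 * A * exp (2 * s) - 2 * C * exp (-2 * s)) ^ 2 / 4 - expTrinomial A B C s ^ 2
      = 4 * A * C - B ^ 2 := by
  have h : exp (2 * s) * exp (-2 * s) = 1 := by rw [← exp_add]; simp
  simp only [expTrinomial]
  linear_combination (4 * A * C) * h

theorem exists_expTrinomial_ne (hC : C ≠ 0) :
    ∃ s t, expTrinomial A B C s ≠ expTrinomial A B C t := by
  by_contra! hconst
  have h2 : exp (2 * (log 2 / 2)) = 2 := by rw [mul_div_cancel₀ _ two_ne_zero, exp_log two_pos]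
  have h2' : exp (-(2 * (log 2 / 2))) = 1 / 2 := by
    rw [exp_neg, h2, one_div]
  have hr := hconst 0 (log 2 / 2)
  have hl := hconst 0 (-(log 2 / 2))
  simp only [expTrinomial, mul_zero, exp_zero, mul_neg, neg_mul, neg_neg, h2, h2'] at hr hl
  exact hC (by linarith)

theorem halfBiharmonicODE_expTrinomial_inv (h0 : ∀ s, expTrinomial A B C s ≠ 0) (s : ℝ) :
    3 / 4 * deriv (fun s => (expTrinomial A B C s)⁻¹) s ^ 2
        - 1 / 2 * (expTrinomial A B C s)⁻¹ * deriv (deriv fun s => (expTrinomial A B C s)⁻¹) s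
        - (4 * A * C - B ^ 2) * (expTrinomial A B C s)⁻¹ ^ 4 - (expTrinomial A B C s)⁻¹ ^ 2
      = 0 := by
  have hode := halfBiharmonicODE_inv_eq (-1) (4 * A * C - B ^ 2) (hasDerivAt_expTrinomial A B C)
    (hasDerivAt_deriv_expTrinomial A B C) h0 s
  linear_combination
    hode + (expTrinomial A B C s ^ 4)⁻¹ * expTrinomial_ermakov_invariant A B C s

end ExpTrinomial

theorem expTrinomial_eq_div (b₁ b₆ b₇ s : ℝ) :
    expTrinomial ((b₆ ^ 2 + 4 + 4 * b₁ ^ 2) * exp (2 * b₇) / 4) (b₆ / 2) (exp (-2 * b₇) / 4) s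
      = ((b₆ + exp (-2 * (b₇ + s))) ^ 2 + 4 + 4 * b₁ ^ 2) / (4 * exp (-2 * (b₇ + s))) := by
  have hu : exp (-2 * (b₇ + s)) = exp (-2 * b₇) * exp (-2 * s) := by
    rw [← exp_add]; ring_nf
  have h1 : exp (2 * b₇) * exp (-2 * b₇) = 1 := by rw [← exp_add]; simp
  have h2 : exp (2 * s) * exp (-2 * s) = 1 := by rw [← exp_add]; simp
  rw [hu, eq_div_iff (by positivity)]
  simp only [expTrinomial]
  linear_combination (b₆ ^ 2 + 4 + 4 * b₁ ^ 2) * (exp (2 * b₇) * exp (-2 * b₇) * h2 + h1)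

/-- In `H³` (K = −1): `k(s) = 4e^{−2(b₇+s)}/((b₆ + e^{−2(b₇+s)})² + 4 + 4b₁²)` is positive,
non-constant and satisfies `(3/4)k'² − (1/2)k k'' − (1+b₁²)k⁴ − k² = 0`. -/
theorem stmt_13 (b₁ b₆ b₇ : ℝ)
    (k : ℝ → ℝ)
    (hk : k = fun s => 4 * Real.exp (-2 * (b₇ + s)) /
      ((b₆ + Real.exp (-2 * (b₇ + s))) ^ 2 + 4 + 4 * b₁ ^ 2)) :
    (∀ s, 0 < k s) ∧ (∃ s t : ℝ, k s ≠ k t) ∧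
      ∀ s, 3 / 4 * (deriv k s) ^ 2 - 1 / 2 * k s * deriv (deriv k) s
        - (1 + b₁ ^ 2) * (k s) ^ 4 - (k s) ^ 2 = 0 := by
  set A := (b₆ ^ 2 + 4 + 4 * b₁ ^ 2) * exp (2 * b₇) / 4
  set C := exp (-2 * b₇) / 4
  have hq_pos s : 0 < expTrinomial A (b₆ / 2) C s := by rw [expTrinomial_eq_div]; positivity
  have hAC : 4 * A * C - (b₆ / 2) ^ 2 = 1 + b₁ ^ 2 := by
    have h : exp (2 * b₇) * exp (-2 * b₇) = 1 := by rw [← exp_add]; simp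
    linear_combination (b₆ ^ 2 + 4 + 4 * b₁ ^ 2) / 4 * h
  obtain rfl : k = fun s => (expTrinomial A (b₆ / 2) C s)⁻¹ := by
    subst hk; funext s; rw [expTrinomial_eq_div, inv_div]
  refine ⟨fun s => inv_pos.2 (hq_pos s), ?_, fun s => ?_⟩
  · obtain ⟨s, t, hst⟩ := exists_expTrinomial_ne A (b₆ / 2) C (by positivity)
    exact ⟨s, t, fun h => hst (inv_injective h)⟩
  · rw [← hAC]
    exact halfBiharmonicODE_expTrinomial_inv A (b₆ / 2) C (fun s => (hq_pos s).ne') s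
end

section
/- Let n ≥ 1, let p > 0 be a real number with p ≠ 1/2, and let γ : ℝ → EuclideanSpace ℝ (Fin n) be a smooth curve with ‖γ'(s)‖ = 1 for all s and γ''(s) ≠ 0 for all s. If the map s ↦ ‖γ''(s)‖^{p-2}·γ''(s) has vanishing second derivative at every s ∈ ℝ (i.e. γ is a p-biharmonic curve in Euclidean space), then the function s ↦ ‖γ''(s)‖ is constant on ℝ. -/
/-!
Write `T = γ'`, `N = γ''`, `κ = ‖N‖` and `F = κ^(p-2) • N`. Since `‖T‖ = 1`, `N ⟂ T`, hence
`⟪F, T⟫ = 0` and, differentiating, `⟪F', T⟫ = -⟪F, N⟫ = -κ^p`. Differentiating once more and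
using `F'' = 0` gives `⟪F', N⟫ = -(κ^p)' = -p κ^(p-1) κ'`, while expanding `F'` directly gives
`⟪F', N⟫ = (p-1) κ^(p-1) κ'`. Hence `(2p - 1) κ^(p-1) κ' = 0`, so `κ' = 0` when `p ≠ 1/2`.
-/

open scoped RealInnerProductSpace

variable {E : Type*} [NormedAddCommGroup E] [InnerProductSpace ℝ E]

theorem inner_deriv_left_eq_neg_of_inner_eq_const {f g : ℝ → E} {c s : ℝ}
    (hf : DifferentiableAt ℝ f s) (hg : DifferentiableAt ℝ g s) (h : ∀ t, ⟪f t, g t⟫ = c) :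
    ⟪deriv f s, g s⟫ = -⟪f s, deriv g s⟫ := by
  have hderiv := deriv_inner_apply (𝕜 := ℝ) hf hg
  rw [funext h, deriv_const] at hderiv
  linarith

theorem norm_mul_deriv_norm_eq_inner_deriv {N : ℝ → E} {s : ℝ} (hN : DifferentiableAt ℝ N s)
    (h0 : N s ≠ 0) :
    ‖N s‖ * deriv (fun t => ‖N t‖) s = ⟪N s, deriv N s⟫ := by
  have hsq₁ := hN.hasDerivAt.norm_sq
  have hsq₂ := ((hN.norm ℝ h0).hasDerivAt).pow 2
  have := hsq₁.unique hsq₂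
  norm_num at this
  linarith

theorem inner_deriv_rpow_norm_smul_self {N : ℝ → E} {q s : ℝ} (hN : DifferentiableAt ℝ N s)
    (h0 : N s ≠ 0) :
    ⟪deriv (fun t => ‖N t‖ ^ q • N t) s, N s⟫
      = (q + 1) * ‖N s‖ ^ (q + 1) * deriv (fun t => ‖N t‖) s := by
  have hκ : 0 < ‖N s‖ := norm_pos_iff.mpr h0
  have hκd := hN.norm ℝ h0
  rw [deriv_fun_smul (hκd.rpow_const (Or.inl hκ.ne')) hN, deriv_rpow_const hκd (Or.inl hκ.ne'),
    inner_add_left, real_inner_smul_left, real_inner_smul_left, real_inner_self_eq_norm_sq,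
    real_inner_comm, ← norm_mul_deriv_norm_eq_inner_deriv hN h0]
  have e₁ : ‖N s‖ ^ q * ‖N s‖ = ‖N s‖ ^ (q + 1) := (Real.rpow_add_one hκ.ne' q).symm
  have e₂ : ‖N s‖ ^ (q - 1) * ‖N s‖ ^ 2 = ‖N s‖ ^ (q + 1) := by
    rw [← Real.rpow_natCast, ← Real.rpow_add hκ]
    ring_nf
  linear_combination deriv (fun t => ‖N t‖) s * e₁ + q * deriv (fun t => ‖N t‖) s * e₂

theorem ContDiff.rpow_norm_smul {N : ℝ → E} {n : WithTop ℕ∞} (hN : ContDiff ℝ n N)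
    (h0 : ∀ t, N t ≠ 0) (q : ℝ) : ContDiff ℝ n (fun t => ‖N t‖ ^ q • N t) := by
  refine ContDiff.smul (contDiff_iff_contDiffAt.mpr fun t => ?_) hN
  exact (hN.contDiffAt.norm ℝ (h0 t)).rpow_const_of_ne (norm_ne_zero_iff.mpr (h0 t))

theorem deriv_norm_deriv_eq_zero_of_deriv_deriv_rpow_norm_smul_eq_zero {T : ℝ → E} {p s : ℝ}
    (hp : p ≠ 1 / 2) (hT : Differentiable ℝ T) (hN : Differentiable ℝ (deriv T))
    (hunit : ∀ t, ‖T t‖ = 1) (h0 : ∀ t, deriv T t ≠ 0)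
    (hF' : DifferentiableAt ℝ (deriv (fun t => ‖deriv T t‖ ^ (p - 2) • deriv T t)) s)
    (hbih : deriv (deriv (fun t => ‖deriv T t‖ ^ (p - 2) • deriv T t)) s = 0) :
    deriv (fun t => ‖deriv T t‖) s = 0 := by
  set N := deriv T
  set F := fun t => ‖N t‖ ^ (p - 2) • N t with hFdef
  have hκ : ∀ t, 0 < ‖N t‖ := fun t => norm_pos_iff.mpr (h0 t)
  have hF : Differentiable ℝ F := fun t =>
    (((hN t).norm ℝ (h0 t)).rpow_const (Or.inl (hκ t).ne')).smul (hN t)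
  have hNT : ∀ t, ⟪N t, T t⟫ = 0 := fun t => by
    have := inner_deriv_left_eq_neg_of_inner_eq_const (c := 1) (hT t) (hT t)
      (fun t => by rw [real_inner_self_eq_norm_sq, hunit, one_pow])
    linarith [real_inner_comm (T t) (N t)]
  have hF'T : ∀ t, ⟪deriv F t, T t⟫ = -‖N t‖ ^ p := fun t => by
    rw [inner_deriv_left_eq_neg_of_inner_eq_const (c := 0) (hF t) (hT t)
      (fun t => by rw [hFdef, real_inner_smul_left, hNT, mul_zero]), hFdef,
      real_inner_smul_left, real_inner_self_eq_norm_sq, ← Real.rpow_natCast,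
      ← Real.rpow_add (hκ t)]
    norm_num
  have hF'N : ⟪deriv F s, N s⟫ = -(p * ‖N s‖ ^ (p - 1) * deriv (fun t => ‖N t‖) s) := by
    have hdiff := deriv_inner_apply (𝕜 := ℝ) hF' (hT s)
    rw [funext hF'T, hbih, inner_zero_left, add_zero, deriv.fun_neg,
      deriv_rpow_const ((hN s).norm ℝ (h0 s)) (Or.inl (hκ s).ne')] at hdiff
    linear_combination -hdiff
  have hkey : (2 * p - 1) * (‖N s‖ ^ (p - 1) * deriv (fun t => ‖N t‖) s) = 0 := by
    have hexpand := inner_deriv_rpow_norm_smul_self (q := p - 2) (hN s) (h0 s)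
    rw [show p - 2 + 1 = p - 1 by ring, ← hFdef, hF'N] at hexpand
    linear_combination -hexpand
  have h2p : 2 * p - 1 ≠ 0 := fun h => hp (by linarith)
  exact (mul_eq_zero.mp ((mul_eq_zero.mp hkey).resolve_left h2p)).resolve_left
    (Real.rpow_pos_of_pos (hκ s) _).ne'

theorem stmt_17_general (n : ℕ) (p : ℝ) (hp2 : p ≠ 1 / 2)
    (γ : ℝ → EuclideanSpace ℝ (Fin n)) (hγ : ContDiff ℝ (⊤ : ℕ∞) γ)
    (harc : ∀ s, ‖deriv γ s‖ = 1)
    (hne : ∀ s, deriv (deriv γ) s ≠ 0)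
    (hbih : ∀ s, deriv (deriv
      (fun t => ‖deriv (deriv γ) t‖ ^ (p - 2) • deriv (deriv γ) t)) s = 0) :
    ∃ c : ℝ, ∀ s : ℝ, ‖deriv (deriv γ) s‖ = c := by
  obtain ⟨-, hT⟩ := contDiff_infty_iff_deriv.mp hγ
  obtain ⟨hTd, hN⟩ := contDiff_infty_iff_deriv.mp hT
  obtain ⟨-, hF'⟩ := contDiff_infty_iff_deriv.mp (hN.rpow_norm_smul hne (p - 2))
  have hNd := hN.differentiable (by simp)
  have hκ' : ∀ s, deriv (fun t => ‖deriv (deriv γ) t‖) s = 0 := fun s =>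
    deriv_norm_deriv_eq_zero_of_deriv_deriv_rpow_norm_smul_eq_zero hp2 hTd hNd harc hne
      (hF'.differentiable (by simp) s) (hbih s)
  exact ⟨_, fun s => is_const_of_deriv_eq_zero (hNd.norm ℝ hne) hκ' s 0⟩

/-- A non-geodesic `p`-biharmonic curve in Euclidean space, parametrized by arclength,
has constant geodesic curvature whenever `p ≠ 1/2`. -/
theorem stmt_17 (n : ℕ) (hn : 1 ≤ n) (p : ℝ) (hp : 0 < p) (hp2 : p ≠ 1 / 2)
    (γ : ℝ → EuclideanSpace ℝ (Fin n)) (hγ : ContDiff ℝ (⊤ : ℕ∞) γ)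
    (harc : ∀ s, ‖deriv γ s‖ = 1)
    (hne : ∀ s, deriv (deriv γ) s ≠ 0)
    (hbih : ∀ s, deriv (deriv
      (fun t => ‖deriv (deriv γ) t‖ ^ (p - 2) • deriv (deriv γ) t)) s = 0) :
    ∃ c : ℝ, ∀ s : ℝ, ‖deriv (deriv γ) s‖ = c :=
  stmt_17_general n p hp2 γ hγ harc hne hbih
end

section
/- Let n ≥ 1, let p > 0 be a real number, and let L > 0. There is no smooth curve γ : ℝ → EuclideanSpace ℝ (Fin n) such that γ(s + L) = γ(s) for all s, ‖γ'(s)‖ = 1 for all s, γ''(s) ≠ 0 for all s, and the map s ↦ ‖γ''(s)‖^{p-2}·γ''(s) has vanishing second derivative at every s ∈ ℝ. -/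
open Function
open scoped ContDiff

/-! If `T = ‖γ''‖^(p-2) • γ''` satisfies `T'' = 0`, then `T` is affine, and periodicity forces it to
be a constant `c`. Then `⟪γ', c⟫' = ⟪γ'', T⟫ = ‖γ''‖^p > 0` because `γ'' ≠ 0`, so `⟪γ', c⟫` is
strictly increasing, which is impossible for a periodic function. -/

section Calculus

variable {𝕜 : Type*} [RCLike 𝕜] {E : Type*} [NormedAddCommGroup E] [NormedSpace 𝕜 E]

theorem Function.Periodic.deriv {f : 𝕜 → E} {L : 𝕜} (h : Periodic f L) : Periodic (deriv f) L :=
  fun s => by rw [← deriv_comp_add_const, funext h]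

theorem exists_eq_smul_add_of_deriv_eq_const {f : 𝕜 → E} {d : E} (hf : Differentiable 𝕜 f)
    (hd : ∀ t, deriv f t = d) : ∃ a, ∀ t, f t = t • d + a := by
  obtain ⟨a, ha⟩ := isOpen_univ.exists_eq_add_of_deriv_eq isPreconnected_univ hf.differentiableOn
    (differentiable_id.smul_const d).differentiableOn fun t _ => by
      rw [hd, ((hasDerivAt_id t).smul_const d).deriv, one_smul]
  exact ⟨a, fun t => ha (Set.mem_univ t)⟩

theorem eq_zero_of_periodic_of_deriv_eq_const {f : 𝕜 → E} {L : 𝕜} {d : E}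
    (h : Periodic f L) (hL : L ≠ 0) (hf : Differentiable 𝕜 f) (hd : ∀ t, deriv f t = d) :
    d = 0 := by
  obtain ⟨a, ha⟩ := exists_eq_smul_add_of_deriv_eq_const hf hd
  have hLd : L • d = 0 := by simpa [ha] using h 0
  exact (smul_eq_zero.mp hLd).resolve_left hL

theorem eq_of_periodic_of_deriv_deriv_eq_zero {f : 𝕜 → E} {L : 𝕜} (h : Periodic f L)
    (hL : L ≠ 0) (hf : Differentiable 𝕜 f) (hf' : Differentiable 𝕜 (deriv f))
    (hf'' : ∀ t, deriv (deriv f) t = 0) (s t : 𝕜) : f s = f t := by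
  have hd : ∀ t, deriv f t = deriv f 0 := fun t => is_const_of_deriv_eq_zero hf' hf'' t 0
  have hd0 : deriv f 0 = 0 := eq_zero_of_periodic_of_deriv_eq_const h hL hf hd
  exact is_const_of_deriv_eq_zero hf (fun t => (hd t).trans hd0) s t

end Calculus

theorem Function.Periodic.not_strictMono {α β : Type*} [AddZeroClass α] [LinearOrder α]
    [Preorder β] {f : α → β} {L : α} (h : Periodic f L) (hL : L ≠ 0) : ¬ StrictMono f :=
  fun hf => hL (by simpa using hf.injective (h 0))

section InnerProduct

variable {E : Type*} [NormedAddCommGroup E] [InnerProductSpace ℝ E]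

theorem ContDiff.rpow_norm_smul_s18 {F : Type*} [NormedAddCommGroup F] [NormedSpace ℝ F]
    {n : WithTop ℕ∞} {g : F → E} (hg : ContDiff ℝ n g) (h0 : ∀ x, g x ≠ 0) (q : ℝ) :
    ContDiff ℝ n fun x => ‖g x‖ ^ q • g x :=
  ((hg.norm ℝ h0).rpow_const_of_ne fun x => norm_ne_zero_iff.mpr (h0 x)).smul hg

theorem inner_rpow_norm_smul_self_pos {v : E} (hv : v ≠ 0) (q : ℝ) :
    0 < inner ℝ v (‖v‖ ^ q • v) := by
  have hpos : 0 < ‖v‖ := norm_pos_iff.mpr hv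
  rw [real_inner_smul_right, real_inner_self_eq_norm_sq]
  positivity

end InnerProduct

theorem stmt_18_general (n : ℕ) (p : ℝ) (L : ℝ) (hL : 0 < L) :
    ¬ ∃ γ : ℝ → EuclideanSpace ℝ (Fin n), ContDiff ℝ (⊤ : ℕ∞) γ ∧
      (∀ s, γ (s + L) = γ s) ∧ (∀ s, ‖deriv γ s‖ = 1) ∧
      (∀ s, deriv (deriv γ) s ≠ 0) ∧
      (∀ s, deriv (deriv
        (fun t => ‖deriv (deriv γ) t‖ ^ (p - 2) • deriv (deriv γ) t)) s = 0) := by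
  rintro ⟨γ, hγ, hper, -, hne, hbh⟩
  have hγ' : ContDiff ℝ ∞ (deriv γ) := (contDiff_infty_iff_deriv.mp hγ).2
  have hγ'' : ContDiff ℝ ∞ (deriv (deriv γ)) := (contDiff_infty_iff_deriv.mp hγ').2
  set T := fun t => ‖deriv (deriv γ) t‖ ^ (p - 2) • deriv (deriv γ) t with hT
  have hTsmooth : ContDiff ℝ ∞ T := hγ''.rpow_norm_smul_s18 hne (p - 2)
  have hper' : Periodic (deriv γ) L := Periodic.deriv hper
  have hTper : Periodic T L := fun t => by simp only [hT, hper'.deriv t]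
  have hTconst : ∀ t, T t = T 0 := fun t =>
    eq_of_periodic_of_deriv_deriv_eq_zero hTper hL.ne' (hTsmooth.differentiable (by simp))
      ((contDiff_infty_iff_deriv.mp hTsmooth).2.differentiable (by simp)) hbh t 0
  have hmono : StrictMono fun t => inner ℝ (deriv γ t) (T 0) := by
    refine strictMono_of_deriv_pos fun t => ?_
    rw [(((hγ'.differentiable (by simp)) t).hasDerivAt.inner ℝ (hasDerivAt_const t _)).deriv,
      ← hTconst t]
    simpa using inner_rpow_norm_smul_self_pos (hne t) (p - 2)
  exact (hper'.comp (inner ℝ · (T 0))).not_strictMono hL.ne' hmono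

/-- There is no closed (periodic) non-geodesic `p`-biharmonic curve in Euclidean space
parametrized by arclength. -/
theorem stmt_18 (n : ℕ) (hn : 1 ≤ n) (p : ℝ) (hp : 0 < p) (L : ℝ) (hL : 0 < L) :
    ¬ ∃ γ : ℝ → EuclideanSpace ℝ (Fin n), ContDiff ℝ (⊤ : ℕ∞) γ ∧
      (∀ s, γ (s + L) = γ s) ∧ (∀ s, ‖deriv γ s‖ = 1) ∧
      (∀ s, deriv (deriv γ) s ≠ 0) ∧
      (∀ s, deriv (deriv
        (fun t => ‖deriv (deriv γ) t‖ ^ (p - 2) • deriv (deriv γ) t)) s = 0) :=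
  stmt_18_general n p L hL
end

section
/- Let n ≥ 1, let p > 0 be a real number, let a < b be reals, and let γ, η : ℝ → EuclideanSpace ℝ (Fin n) be smooth maps such that γ''(s) ≠ 0 for all s ∈ [a, b] and η(a) = η(b) = 0, η'(a) = η'(b) = 0. Set w(s) = ‖γ''(s)‖^{p-2}·γ''(s). Then the function t ↦ (1/p)·∫_a^b ‖γ''(s) + t·η''(s)‖^p ds is differentiable at t = 0 with derivative ∫_a^b ⟨η(s), w''(s)⟩ ds. -/
/-! Write `g = γ''` and `q = η''`. Since `g` does not vanish on the compact interval `[a, b]`,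
the integrand `‖g s + t • q s‖ ^ p` is jointly `C¹` in `(t, s)` near `{0} × [a, b]`, so its
`t`-derivative is uniformly bounded there and one may differentiate under the integral sign,
which gives `p ∫ ⟪w, η''⟫`. Two integrations by parts, whose boundary terms vanish because `η`
and `η'` vanish at `a` and `b`, then move both derivatives from `η` onto `w`. -/

open Set MeasureTheory Metric Function intervalIntegral
open scoped RealInnerProductSpace ContDiff Interval

variable {E : Type*} [NormedAddCommGroup E]

theorem HasDerivAt.norm_rpow [InnerProductSpace ℝ E] {f : ℝ → E} {f' : E} {t p : ℝ}
    (hf : HasDerivAt f f' t) (h0 : f t ≠ 0) :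
    HasDerivAt (fun t => ‖f t‖ ^ p) (p * ⟪‖f t‖ ^ (p - 2) • f t, f'⟫) t := by
  have hsq : ∀ x : E, ‖x‖ ^ p = (‖x‖ ^ 2) ^ (p / 2) := fun x => by
    rw [← Real.rpow_natCast, ← Real.rpow_mul (norm_nonneg x)]; ring_nf
  have hpow : (‖f t‖ ^ 2) ^ (p / 2 - 1) = ‖f t‖ ^ (p - 2) := by
    rw [← Real.rpow_natCast, ← Real.rpow_mul (norm_nonneg _)]; ring_nf
  have h := hf.norm_sq.rpow_const (p := p / 2) (Or.inl (by positivity))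
  simp only [← hsq, hpow] at h
  convert h using 1
  rw [real_inner_smul_left]; ring

theorem hasDerivAt_intervalIntegral_of_continuousOn [NormedSpace ℝ E] {F F' : ℝ → ℝ → E}
    {W : Set (ℝ × ℝ)} {t₀ a b : ℝ} (hW : IsOpen W) (hsub : ∀ s ∈ [[a, b]], (t₀, s) ∈ W)
    (hF : ContinuousOn (uncurry F) W) (hF' : ContinuousOn (uncurry F') W)
    (hderiv : ∀ x ∈ W, HasDerivAt (F · x.2) (F' x.1 x.2) x.1) :
    HasDerivAt (fun t => ∫ s in a..b, F t s) (∫ s in a..b, F' t₀ s) t₀ := by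
  obtain ⟨u, v, hu, -, ht₀u, hv, huvW⟩ := generalized_tube_lemma isCompact_singleton isCompact_uIcc
    hW (by rintro ⟨t, s⟩ ⟨rfl, hs⟩; exact hsub s hs)
  obtain ⟨δ, hδ, hδu⟩ := nhds_basis_closedBall.mem_iff.1 (hu.mem_nhds (ht₀u rfl))
  have hKW : closedBall t₀ δ ×ˢ [[a, b]] ⊆ W := fun x hx => huvW ⟨hδu hx.1, hv hx.2⟩
  have slice : ∀ {G : ℝ → ℝ → E}, ContinuousOn (uncurry G) W →
      ∀ t ∈ closedBall t₀ δ, ContinuousOn (G t) [[a, b]] := fun hG t ht =>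
    hG.comp (Continuous.prodMk_right t).continuousOn fun s hs => hKW ⟨ht, hs⟩
  have ht₀ : t₀ ∈ closedBall t₀ δ := mem_closedBall_self hδ.le
  obtain ⟨C, hC⟩ := ((isCompact_closedBall t₀ δ).prod isCompact_uIcc).exists_bound_of_continuousOn
    (hF'.mono hKW)
  refine (hasDerivAt_integral_of_dominated_loc_of_deriv_le (bound := fun _ => C)
    (ball_mem_nhds t₀ hδ) ?_ ((slice hF t₀ ht₀).intervalIntegrable)
    (((slice hF' t₀ ht₀).mono uIoc_subset_uIcc).aestronglyMeasurable measurableSet_uIoc)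
    (ae_of_all _ fun s hs t ht => hC (t, s) ⟨ball_subset_closedBall ht, uIoc_subset_uIcc hs⟩)
    intervalIntegrable_const
    (ae_of_all _ fun s hs t ht =>
      hderiv (t, s) (hKW ⟨ball_subset_closedBall ht, uIoc_subset_uIcc hs⟩))).2
  filter_upwards [ball_mem_nhds t₀ hδ] with t ht
  exact ((slice hF t (ball_subset_closedBall ht)).mono uIoc_subset_uIcc).aestronglyMeasurable
    measurableSet_uIoc

theorem hasDerivAt_intervalIntegral_norm_add_smul_rpow [InnerProductSpace ℝ E] {g q : ℝ → E}
    (hg : Continuous g) (hq : Continuous q) (p : ℝ) {a b : ℝ}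
    (hne : ∀ s ∈ [[a, b]], g s ≠ 0) :
    HasDerivAt (fun t : ℝ => ∫ s in a..b, ‖g s + t • q s‖ ^ p)
      (p * ∫ s in a..b, ⟪‖g s‖ ^ (p - 2) • g s, q s⟫) 0 := by
  set φ : ℝ × ℝ → E := fun x => g x.2 + x.1 • q x.2
  have hφ : Continuous φ := by fun_prop
  have hF : ContinuousOn (fun x => ‖φ x‖ ^ p) {x | φ x ≠ 0} := fun x hx =>
    (hφ.norm.continuousAt.rpow_const (Or.inl (norm_ne_zero_iff.2 hx))).continuousWithinAt
  have hF' : ContinuousOn (fun x => p * ⟪‖φ x‖ ^ (p - 2) • φ x, q x.2⟫) {x | φ x ≠ 0} :=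
    fun x hx => ((((hφ.norm.continuousAt.rpow_const (Or.inl (norm_ne_zero_iff.2 hx))).smul
      hφ.continuousAt).inner (hq.comp continuous_snd).continuousAt).const_mul p).continuousWithinAt
  have h := hasDerivAt_intervalIntegral_of_continuousOn (F := fun t s => ‖g s + t • q s‖ ^ p)
    (F' := fun t s => p * ⟪‖g s + t • q s‖ ^ (p - 2) • (g s + t • q s), q s⟫) (t₀ := 0)
    (isOpen_ne_fun hφ continuous_const) (by simpa [φ] using hne) hF hF'
    fun x hx => HasDerivAt.norm_rpow (by simpa using
      ((hasDerivAt_id x.1).smul_const (q x.2)).const_add (g x.2)) hx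
  simpa [intervalIntegral.integral_const_mul] using h

theorem integral_inner_deriv_eq_deriv_inner [InnerProductSpace ℝ E] {u u' v v' : ℝ → E}
    {a b : ℝ} (hu : ∀ s ∈ [[a, b]], HasDerivAt u (u' s) s)
    (hv : ∀ s ∈ [[a, b]], HasDerivAt v (v' s) s)
    (hu' : ContinuousOn u' [[a, b]]) (hv' : ContinuousOn v' [[a, b]]) :
    ∫ s in a..b, ⟪u s, v' s⟫ = ⟪u b, v b⟫ - ⟪u a, v a⟫ - ∫ s in a..b, ⟪u' s, v s⟫ := by
  have hu_cont : ContinuousOn u [[a, b]] := fun s hs => (hu s hs).continuousAt.continuousWithinAt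
  have hv_cont : ContinuousOn v [[a, b]] := fun s hs => (hv s hs).continuousAt.continuousWithinAt
  have hint₁ : IntervalIntegrable (fun s => ⟪u' s, v s⟫) volume a b :=
    (hu'.inner hv_cont).intervalIntegrable
  have hint₂ : IntervalIntegrable (fun s => ⟪u s, v' s⟫) volume a b :=
    (hu_cont.inner hv').intervalIntegrable
  have hftc := integral_eq_sub_of_hasDerivAt (fun s hs => (hu s hs).inner ℝ (hv s hs))
    (hint₂.add hint₁)
  rw [integral_add hint₂ hint₁] at hftc
  linarith

theorem integral_inner_deriv_deriv_eq_of_contDiffOn [InnerProductSpace ℝ E] {u v : ℝ → E}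
    {U : Set ℝ} {a b : ℝ} (hU : IsOpen U) (habU : [[a, b]] ⊆ U) (hu : ContDiffOn ℝ 2 u U)
    (hv : ContDiffOn ℝ 2 v U) (hva : v a = 0) (hvb : v b = 0) (hva' : deriv v a = 0)
    (hvb' : deriv v b = 0) :
    ∫ s in a..b, ⟪u s, deriv (deriv v) s⟫ = ∫ s in a..b, ⟪v s, deriv (deriv u) s⟫ := by
  have hasDerivAt : ∀ {f : ℝ → E}, DifferentiableOn ℝ f U →
      ∀ s ∈ [[a, b]], HasDerivAt f (deriv f s) s := fun hf s hs =>
    (hf.differentiableAt (hU.mem_nhds (habU hs))).hasDerivAt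
  have hu' : ContDiffOn ℝ 1 (deriv u) U := hu.deriv_of_isOpen hU le_rfl
  have hv' : ContDiffOn ℝ 1 (deriv v) U := hv.deriv_of_isOpen hU le_rfl
  rw [integral_inner_deriv_eq_deriv_inner (hasDerivAt (hu.differentiableOn two_ne_zero))
      (hasDerivAt (hv'.differentiableOn one_ne_zero))
      (hu'.continuousOn.mono habU) ((hv'.continuousOn_deriv_of_isOpen hU le_rfl).mono habU),
    integral_inner_deriv_eq_deriv_inner (hasDerivAt (hu'.differentiableOn one_ne_zero))
      (hasDerivAt (hv.differentiableOn two_ne_zero))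
      ((hu'.continuousOn_deriv_of_isOpen hU le_rfl).mono habU) (hv'.continuousOn.mono habU)]
  simp only [hva, hvb, hva', hvb', inner_zero_right, sub_zero, zero_sub, neg_neg]
  simp_rw [real_inner_comm]

theorem stmt_19_general (n : ℕ) (p : ℝ) (hp : 0 < p) (a b : ℝ) (hab : a < b)
    (γ η : ℝ → EuclideanSpace ℝ (Fin n))
    (hγ : ContDiff ℝ (⊤ : ℕ∞) γ) (hη : ContDiff ℝ (⊤ : ℕ∞) η)
    (hne : ∀ s ∈ Set.Icc a b, deriv (deriv γ) s ≠ 0)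
    (hηa : η a = 0) (hηb : η b = 0) (hηa' : deriv η a = 0) (hηb' : deriv η b = 0)
    (w : ℝ → EuclideanSpace ℝ (Fin n))
    (hw : w = fun s => ‖deriv (deriv γ) s‖ ^ (p - 2) • deriv (deriv γ) s) :
    HasDerivAt
      (fun t : ℝ => (1 / p) * ∫ s in a..b, ‖deriv (deriv γ) s + t • deriv (deriv η) s‖ ^ p)
      (∫ s in a..b, (inner ℝ (η s) (deriv (deriv w) s) : ℝ)) 0 := by
  set g := deriv (deriv γ)
  have h2 : ((2 : ℕ∞) : WithTop ℕ∞) ≤ ∞ := WithTop.coe_le_coe.2 le_top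
  have hg : ContDiff ℝ 2 g := (hγ.iterate_deriv 2).of_le h2
  have hη'' : Continuous (deriv (deriv η)) := (hη.iterate_deriv 2).continuous
  have hgU : IsOpen {s | g s ≠ 0} := isOpen_ne_fun hg.continuous continuous_const
  have hne' : [[a, b]] ⊆ {s | g s ≠ 0} := uIcc_of_le hab.le ▸ hne
  have hwU : ContDiffOn ℝ 2 w {s | g s ≠ 0} := hw ▸ fun s hs =>
    (((hg.contDiffAt.norm ℝ hs).rpow_const_of_ne (norm_ne_zero_iff.2 hs)).smul
      hg.contDiffAt).contDiffWithinAt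
  have hvar := (hasDerivAt_intervalIntegral_norm_add_smul_rpow hg.continuous hη'' p
    hne').const_mul (1 / p)
  simp only [← congrFun hw] at hvar
  refine hvar.congr_deriv ?_
  rw [integral_inner_deriv_deriv_eq_of_contDiffOn hgU hne' hwU (hη.of_le h2).contDiffOn
    hηa hηb hηa' hηb']
  field_simp

/-- First variation of the `p`-bienergy in Euclidean space: for a variation `γ + tη` with
`η`, `η'` vanishing at the endpoints, the derivative at `t = 0` of
`t ↦ (1/p)∫_a^b ‖γ'' + tη''‖^p` equals `∫_a^b ⟨η, w''⟩` where `w = ‖γ''‖^{p−2} γ''`. -/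
theorem stmt_19 (n : ℕ) (hn : 1 ≤ n) (p : ℝ) (hp : 0 < p) (a b : ℝ) (hab : a < b)
    (γ η : ℝ → EuclideanSpace ℝ (Fin n))
    (hγ : ContDiff ℝ (⊤ : ℕ∞) γ) (hη : ContDiff ℝ (⊤ : ℕ∞) η)
    (hne : ∀ s ∈ Set.Icc a b, deriv (deriv γ) s ≠ 0)
    (hηa : η a = 0) (hηb : η b = 0) (hηa' : deriv η a = 0) (hηb' : deriv η b = 0)
    (w : ℝ → EuclideanSpace ℝ (Fin n))
    (hw : w = fun s => ‖deriv (deriv γ) s‖ ^ (p - 2) • deriv (deriv γ) s) :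
    HasDerivAt
      (fun t : ℝ => (1 / p) * ∫ s in a..b, ‖deriv (deriv γ) s + t • deriv (deriv η) s‖ ^ p)
      (∫ s in a..b, (inner ℝ (η s) (deriv (deriv w) s) : ℝ)) 0 :=
  stmt_19_general n p hp a b hab γ η hγ hη hne hηa hηb hηa' hηb' w hw
end
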